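/- arXiv:2210.06247 — 2 statements merged into one kernel-verified Lean document; each statement's English description precedes it below -/
import Mathlib

section
/- If F is the disjoint union of two digraphs F₁ and F₂, then mader(F) ≤ mader(F₁) + mader(F₂). -/
/-- A digraph (given by its adjacency relation) is acyclic if it contains no
directed cycle (a nonempty closed directed walk with pairwise distinct vertices). -/
def IsAcyclic {V : Type} (D : V → V → Prop) : Prop :=
  ∀ (v : V) (l : List V), (v :: l).Nodup → List.Chain D v (l ++ [v]) → False

/-- The subdigraph induced on a vertex set `S` is acyclic. -/
def AcyclicOn {V : Type} (D : V → V → Prop) (S : Set V) : Prop :=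
  IsAcyclic (fun a b => a ∈ S ∧ b ∈ S ∧ D a b)

/-- `D` admits an acyclic `k`-coloring: each color class induces an acyclic subdigraph. -/
def DichromLE {V : Type} (D : V → V → Prop) (k : ℕ) : Prop :=
  ∃ c : V → Fin k, ∀ i : Fin k, AcyclicOn D {v | c v = i}

/-- The dichromatic number of a digraph. -/
noncomputable def dichrom {V : Type} (D : V → V → Prop) : ℕ :=
  sInf {k | DichromLE D k}

/-- `D` contains a subdivision of `F`: an injective placement of the vertices of `F`
together with, for each arc of `F`, a directed path in `D` between the corresponding
branch vertices, all paths internally disjoint from each other and from the branch vertices. -/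
def ContainsSubdivision {U V : Type} (F : U → U → Prop) (D : V → V → Prop) : Prop :=
  ∃ (f : U → V) (p : ∀ u v, F u v → List V),
    Function.Injective f ∧
    (∀ u v (h : F u v), List.Chain D (f u) (p u v h ++ [f v])) ∧
    (∀ u v (h : F u v), (f u :: (p u v h ++ [f v])).Nodup) ∧
    (∀ u v (h : F u v), ∀ w ∈ p u v h, ∀ x : U, w ≠ f x) ∧
    (∀ u v (h : F u v), ∀ u' v' (h' : F u' v'), (u, v) ≠ (u', v') →
      ∀ w ∈ p u v h, w ∉ p u' v' h')

/-- `mader F`: the least `k` such that every (finite) digraph with dichromatic number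
at least `k` contains a subdivision of `F`. -/
noncomputable def mader {U : Type} (F : U → U → Prop) : ℕ :=
  sInf {k | ∀ (V : Type) (_ : Fintype V) (D : V → V → Prop),
    k ≤ dichrom D → ContainsSubdivision F D}

/-- The restriction of a digraph to a vertex set. -/
def restrictRel {V : Type} (D : V → V → Prop) (S : Set V) : V → V → Prop :=
  fun a b => a ∈ S ∧ b ∈ S ∧ D a b

/-- A digraph is strongly connected if every vertex can reach every other by a directed path. -/
def StrongConnected {V : Type} (D : V → V → Prop) : Prop :=
  ∀ u v, Relation.ReflTransGen D u v

/-- `D` is `k`-dicritical: its dichromatic number is `k` and every proper subdigraph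
(a subset of vertices together with a subset of the arcs inside it) has dichromatic
number strictly less than `k`. -/
def Dicritical {V : Type} (D : V → V → Prop) (k : ℕ) : Prop :=
  dichrom D = k ∧
  ∀ (S : Set V) (A : V → V → Prop),
    (∀ a b, A a b → a ∈ S ∧ b ∈ S ∧ D a b) →
    ¬(S = Set.univ ∧ A = D) →
    dichrom (fun a b : S => A a b) < k

/-- The disjoint union of two digraphs. -/
def disjUnion {U W : Type} (F₁ : U → U → Prop) (F₂ : W → W → Prop) :
    U ⊕ W → U ⊕ W → Prop
  | Sum.inl a, Sum.inl b => F₁ a b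
  | Sum.inr a, Sum.inr b => F₂ a b
  | _, _ => False

/-!
Let `mᵢ = mader Fᵢ` and take an acyclic colouring of a digraph `D` with `k = χ⃗(D) ≥ m₁ + m₂`
colours.
If `S` is the union of the first `m₁` colour classes, then `χ⃗(D[S]) ≤ m₁` and
`χ⃗(D[Sᶜ]) ≤ k - m₁`, while `k ≤ χ⃗(D[S]) + χ⃗(D[Sᶜ])` by subadditivity. Hence both bounds are
equalities, so `D[S]` contains a subdivision of `F₁` and `D[Sᶜ]` one of `F₂`; being
vertex-disjoint, they form a subdivision of `F₁ ⊔ F₂`.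
-/

open Function

section Digraph

variable {V V' : Type}

theorem IsAcyclic.comap {D : V → V → Prop} {D' : V' → V' → Prop} (f : V' → V)
    (hf : Injective f) (hD : ∀ a b, D' a b → D (f a) (f b)) (h : IsAcyclic D) :
    IsAcyclic D' := fun v l hnd hch =>
  h (f v) (l.map f) (by simpa using hnd.map hf) <| show List.IsChain _ _ by
    simpa using List.isChain_map_of_isChain f hD hch

theorem IsAcyclic.of_subtype {P : V → Prop} {D : V → V → Prop}
    (hP : ∀ a b, D a b → P a ∧ P b) (h : IsAcyclic fun a b : Subtype P => D a b) :
    IsAcyclic D := by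
  intro v l hnd (hch : List.IsChain D (v :: (l ++ [v])))
  have hv : P v := by
    cases l <;> exact (hP _ _ (List.isChain_cons_cons.1 hch).1).1
  have hcycle : ∀ x ∈ v :: (l ++ [v]), P x :=
    hch.induction P _ (fun _ y hxy _ => (hP _ y hxy).2) (fun _ => hv)
  have hl : ∀ x ∈ l, P x := fun x hx => hcycle x (by simp [hx])
  refine h ⟨v, hv⟩ (l.attachWith P hl) ?_ ?_
  · exact List.Nodup.of_map Subtype.val (by simpa using hnd)
  · have hlift := (List.isChain_attachWith hcycle (r := fun a b : Subtype P => D a b)).2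
      (hch.imp fun a b hab => ⟨(hP a b hab).1, (hP a b hab).2, hab⟩)
    show List.IsChain _ _
    simpa using hlift

def induce (D : V → V → Prop) (S : Set V) : S → S → Prop := fun a b => D a b

theorem AcyclicOn.of_induce {D : V → V → Prop} {S T : Set V} (hT : T ⊆ S)
    (h : AcyclicOn (induce D S) {x | x.1 ∈ T}) : AcyclicOn D T :=
  IsAcyclic.of_subtype (P := (· ∈ S)) (fun _ _ hab => ⟨hT hab.1, hT hab.2.1⟩) h

def IsAcyclicColoring {ι : Type} (D : V → V → Prop) (c : V → ι) : Prop :=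
  ∀ i, AcyclicOn D {v | c v = i}

theorem IsAcyclicColoring.dichromLE {ι : Type} [Fintype ι] {D : V → V → Prop} {c : V → ι}
    (h : IsAcyclicColoring D c) : DichromLE D (Fintype.card ι) :=
  ⟨Fintype.equivFin ι ∘ c, fun j => by
    simpa only [comp_apply, ← Equiv.eq_symm_apply] using h _⟩

theorem IsAcyclicColoring.comap {ι ι' : Type} {D : V → V → Prop} {D' : V' → V' → Prop}
    {c : V → ι} {c' : V' → ι'} (f : V' → V) (hf : Injective f)
    (hD : ∀ a b, D' a b → D (f a) (f b)) (g : ι' → ι) (hc : ∀ v, g (c' v) = c (f v))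
    (h : IsAcyclicColoring D c) : IsAcyclicColoring D' c' := fun i =>
  (h (g i)).comap f hf fun a b ⟨ha, hb, hab⟩ =>
    ⟨(hc a).symm.trans (congrArg g ha), (hc b).symm.trans (congrArg g hb), hD a b hab⟩

theorem DichromLE.dichrom_le {D : V → V → Prop} {k : ℕ} (h : DichromLE D k) : dichrom D ≤ k :=
  Nat.sInf_le h

theorem DichromLE.dichromLE_dichrom {D : V → V → Prop} {k : ℕ} (h : DichromLE D k) :
    DichromLE D (dichrom D) :=
  Nat.sInf_mem (s := {k | DichromLE D k}) ⟨k, h⟩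

theorem dichromLE_dichrom_of_pos {D : V → V → Prop} (h : 0 < dichrom D) :
    DichromLE D (dichrom D) :=
  Nat.sInf_mem (Nat.nonempty_of_pos_sInf h)

theorem DichromLE.of_induce_compl {D : V → V → Prop} (S : Set V) {a b : ℕ}
    (h₁ : DichromLE (induce D S) a) (h₂ : DichromLE (induce D Sᶜ) b) : DichromLE D (a + b) := by
  classical
  obtain ⟨c₁, hc₁⟩ := h₁
  obtain ⟨c₂, hc₂⟩ := h₂
  let c : V → Fin a ⊕ Fin b := fun v =>
    if hv : v ∈ S then .inl (c₁ ⟨v, hv⟩) else .inr (c₂ ⟨v, hv⟩)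
  have hcS (v : S) : c v = .inl (c₁ v) := dif_pos v.2
  have hcSc (v : ↥Sᶜ) : c v = .inr (c₂ v) := dif_neg v.2
  have hc : IsAcyclicColoring D c := fun
    | .inl i => AcyclicOn.of_induce (S := S) (fun v hv => by by_contra h; simp [c, h] at hv)
        (by simpa [hcS] using hc₁ i)
    | .inr j => AcyclicOn.of_induce (S := Sᶜ) (fun v hv (h : v ∈ S) => by simp [c, h] at hv)
        (by simpa [hcSc] using hc₂ j)
  simpa using hc.dichromLE

theorem IsAcyclicColoring.exists_dichromLE_induce_compl {D : V → V → Prop} {k : ℕ}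
    {c : V → Fin k} (hc : IsAcyclicColoring D c) {a : ℕ} (ha : a ≤ k) :
    ∃ S : Set V, DichromLE (induce D S) a ∧ DichromLE (induce D Sᶜ) (k - a) := by
  let S : Set V := {v | (c v : ℕ) < a}
  have h₁ := (hc.comap Subtype.val Subtype.val_injective (fun _ _ h => h) Subtype.val
    (c' := fun v : S => (⟨c v, v.2⟩ : {i : Fin k // (i : ℕ) < a})) fun _ => rfl).dichromLE
  have h₂ := (hc.comap Subtype.val Subtype.val_injective (fun _ _ h => h) Subtype.val
    (c' := fun v : ↥Sᶜ => (⟨c v, v.2⟩ : {i : Fin k // ¬ (i : ℕ) < a})) fun _ => rfl).dichromLE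
  rw [Fintype.card_subtype, Fin.card_filter_val_lt, min_eq_right ha] at h₁
  rw [Fintype.card_subtype_compl, Fintype.card_subtype, Fin.card_filter_val_lt,
    Fintype.card_fin, min_eq_right ha] at h₂
  exact ⟨S, h₁, h₂⟩

theorem exists_le_dichrom_induce_compl (D : V → V → Prop) {a b : ℕ} (h : a + b ≤ dichrom D) :
    ∃ S : Set V, a ≤ dichrom (induce D S) ∧ b ≤ dichrom (induce D Sᶜ) := by
  rcases Nat.eq_zero_or_pos (a + b) with hab | hab
  · exact ⟨∅, by omega, by omega⟩
  obtain ⟨c, hc⟩ := dichromLE_dichrom_of_pos (D := D) (by omega)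
  obtain ⟨S, h₁, h₂⟩ := IsAcyclicColoring.exists_dichromLE_induce_compl hc (a := a) (by omega)
  have hsplit : dichrom D ≤ dichrom (induce D S) + dichrom (induce D Sᶜ) :=
    (DichromLE.of_induce_compl S h₁.dichromLE_dichrom h₂.dichromLE_dichrom).dichrom_le
  have hS := h₁.dichrom_le
  have hSc := h₂.dichrom_le
  exact ⟨S, by omega, by omega⟩

theorem ContainsSubdivision.map {U : Type} {F : U → U → Prop} {D : V → V → Prop}
    {D' : V' → V' → Prop} (e : V → V') (he : Injective e) (hD : ∀ a b, D a b → D' (e a) (e b)) :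
    ContainsSubdivision F D → ContainsSubdivision F D'
  | ⟨f, p, hf, hch, hnd, hbr, hdis⟩ =>
    ⟨e ∘ f, fun u v h => (p u v h).map e, he.comp hf,
      fun u v h => show List.IsChain _ _ by
        simpa using List.isChain_map_of_isChain e hD (hch u v h),
      fun u v h => by simpa using (hnd u v h).map he,
      fun u v h w hw x => by
        obtain ⟨y, hy, rfl⟩ := List.mem_map.1 hw
        exact he.ne (hbr u v h y hy x),
      fun u v h u' v' h' hne w hw hw' => by
        obtain ⟨y, hy, rfl⟩ := List.mem_map.1 hw
        exact hdis u v h u' v' h' hne y hy ((List.mem_map_of_injective he).1 hw')⟩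

theorem ContainsSubdivision.comap {U U' : Type} {F : U → U → Prop} {F' : U' → U' → Prop}
    {D : V → V → Prop} (e : U' → U) (he : Injective e) (hF : ∀ a b, F' a b → F (e a) (e b)) :
    ContainsSubdivision F D → ContainsSubdivision F' D
  | ⟨f, p, hf, hch, hnd, hbr, hdis⟩ =>
    ⟨f ∘ e, fun u v h => p (e u) (e v) (hF u v h), hf.comp he,
      fun _ _ _ => hch _ _ _, fun _ _ _ => hnd _ _ _, fun _ _ _ w hw x => hbr _ _ _ w hw (e x),
      fun _ _ _ _ _ _ hne => hdis _ _ _ _ _ _ fun heq => hne (by simpa [he.eq_iff] using heq)⟩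

theorem ContainsSubdivision.disjUnion {U₁ U₂ V₁ V₂ : Type} {F₁ : U₁ → U₁ → Prop}
    {F₂ : U₂ → U₂ → Prop} {D₁ : V₁ → V₁ → Prop} {D₂ : V₂ → V₂ → Prop}
    (h₁ : ContainsSubdivision F₁ D₁) (h₂ : ContainsSubdivision F₂ D₂) :
    ContainsSubdivision (disjUnion F₁ F₂) (disjUnion D₁ D₂) := by
  obtain ⟨f₁, p₁, hf₁, hch₁, hnd₁, hbr₁, hdis₁⟩ := h₁
  obtain ⟨f₂, p₂, hf₂, hch₂, hnd₂, hbr₂, hdis₂⟩ := h₂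
  refine ⟨Sum.map f₁ f₂, fun
      | .inl a, .inl b, h => (p₁ a b h).map .inl
      | .inr a, .inr b, h => (p₂ a b h).map .inr
      | .inl _, .inr _, h | .inr _, .inl _, h => h.elim,
    Sum.map_injective.2 ⟨hf₁, hf₂⟩, ?_, ?_, ?_, ?_⟩
  · rintro (a | a) (b | b) h <;> first | exact h.elim | show List.IsChain _ _
    · simpa using List.isChain_map_of_isChain (S := _root_.disjUnion D₁ D₂) Sum.inl
        (fun _ _ h => h) (hch₁ a b h)
    · simpa using List.isChain_map_of_isChain (S := _root_.disjUnion D₁ D₂) Sum.inr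
        (fun _ _ h => h) (hch₂ a b h)
  · rintro (a | a) (b | b) h <;> first | exact h.elim | skip
    · simpa using (hnd₁ a b h).map Sum.inl_injective
    · simpa using (hnd₂ a b h).map Sum.inr_injective
  · rintro (a | a) (b | b) h w hw (x | x) <;> first | exact h.elim | skip
    all_goals obtain ⟨y, hy, rfl⟩ := List.mem_map.1 hw
    · exact Sum.inl_injective.ne (hbr₁ a b h y hy x)
    · simp
    · simp
    · exact Sum.inr_injective.ne (hbr₂ a b h y hy x)
  · rintro (a | a) (b | b) h (a' | a') (b' | b') h' hne w hw hw' <;>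
      first | exact h.elim | exact h'.elim | skip
    all_goals
      simp only [List.mem_map] at hw hw'
      obtain ⟨y, hy, rfl⟩ := hw
      obtain ⟨y', hy', hyy'⟩ := hw'
    · exact hdis₁ a b h a' b' h' (by simpa using hne) y hy (Sum.inl_injective hyy' ▸ hy')
    · simp at hyy'
    · simp at hyy'
    · exact hdis₂ a b h a' b' h' (by simpa using hne) y hy (Sum.inr_injective hyy' ▸ hy')

theorem containsSubdivision_disjUnion_of_induce_compl {U₁ U₂ : Type} {F₁ : U₁ → U₁ → Prop}
    {F₂ : U₂ → U₂ → Prop} {D : V → V → Prop} {S : Set V}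
    (h₁ : ContainsSubdivision F₁ (induce D S)) (h₂ : ContainsSubdivision F₂ (induce D Sᶜ)) :
    ContainsSubdivision (disjUnion F₁ F₂) D := by
  classical
  exact (h₁.disjUnion h₂).map (Equiv.Set.sumCompl S) (Equiv.injective _) fun
    | .inl _, .inl _, h | .inr _, .inr _, h => h

end Digraph

def IsMaderBound {U : Type} (F : U → U → Prop) (k : ℕ) : Prop :=
  ∀ (V : Type) (_ : Fintype V) (D : V → V → Prop), k ≤ dichrom D → ContainsSubdivision F D

section IsMaderBound

variable {U U' : Type} {F : U → U → Prop}

theorem isMaderBound_mader (h : ∃ k, IsMaderBound F k) : IsMaderBound F (mader F) :=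
  Nat.sInf_mem h

theorem mader_eq_zero_of_not_exists_isMaderBound (h : ¬ ∃ k, IsMaderBound F k) : mader F = 0 :=
  Nat.sInf_eq_zero.2 (Or.inr (Set.eq_empty_iff_forall_notMem.2 fun k hk => h ⟨k, hk⟩))

theorem IsMaderBound.comap {F' : U' → U' → Prop} {k : ℕ} (e : U' → U) (he : Injective e)
    (hF : ∀ a b, F' a b → F (e a) (e b)) (h : IsMaderBound F k) : IsMaderBound F' k :=
  fun V hV D hD => (h V hV D hD).comap e he hF

theorem IsMaderBound.disjUnion {F' : U' → U' → Prop} {a b : ℕ} (h : IsMaderBound F a)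
    (h' : IsMaderBound F' b) : IsMaderBound (disjUnion F F') (a + b) := by
  classical
  intro V _ D hD
  obtain ⟨S, hS, hSc⟩ := exists_le_dichrom_induce_compl D hD
  exact containsSubdivision_disjUnion_of_induce_compl (h S inferInstance _ hS)
    (h' _ inferInstance _ hSc)

end IsMaderBound

theorem mader_disjUnion_le_general {U W : Type}
    (F₁ : U → U → Prop) (F₂ : W → W → Prop) :
    mader (disjUnion F₁ F₂) ≤ mader F₁ + mader F₂ := by
  by_cases h : (∃ k, IsMaderBound F₁ k) ∧ ∃ k, IsMaderBound F₂ k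
  · exact Nat.sInf_le ((isMaderBound_mader h.1).disjUnion (isMaderBound_mader h.2))
  · -- Without a bound for `F₁` or `F₂` there is none for the union, so its `mader` is `sInf ∅ = 0`.
    suffices mader (disjUnion F₁ F₂) = 0 by omega
    exact mader_eq_zero_of_not_exists_isMaderBound fun ⟨k, hk⟩ =>
      h ⟨⟨k, hk.comap Sum.inl Sum.inl_injective fun _ _ h => h⟩,
        ⟨k, hk.comap Sum.inr Sum.inr_injective fun _ _ h => h⟩⟩

theorem mader_disjUnion_le {U W : Type} [Fintype U] [Fintype W]
    (F₁ : U → U → Prop) (F₂ : W → W → Prop) :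
    mader (disjUnion F₁ F₂) ≤ mader F₁ + mader F₂ :=
  mader_disjUnion_le_general F₁ F₂
end

section
/- Let D be a digraph, x ∈ V(D), and (V₁, V₂, V₃) an acyclic 3-coloring of D − x. For i ∈ {1,2}, let B_i ⊆ V_i be the vertices in the strong component of x in D[{x} ∪ V_i], and let B_i¹ ∪ A_i be the set of vertices reachable from B_i in D without passing through any vertex of {x} ∪ B_{3−i} (with B_i¹ ⊆ V_i, A_i ⊆ V₃). Set B_i² = V_i \ (B_i¹ ∪ B_i) and E = V₃ \ (A₁ ∪ A₂). If A₁ ∩ A₂ = ∅, then the induced subdigraph D[B₁ ∪ B₁¹ ∪ A₂] is acyclic. -/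
/-! A cycle of `D[B₁ ∪ B₁' ∪ A₂]` cannot stay inside `V₁` nor inside `V₃`, so it passes from
a vertex `a ∈ B₁ ∪ B₁'` to a vertex `b ∈ A₂`. The vertices of `B₁ ∪ B₁' ∪ A₂ ⊆ V₁ ∪ V₃` avoid
`{x} ∪ B₂`, so prefixing the path from `B₁` to `a` shows that `b` also lies in `A₁`. -/

open Relation

namespace List

theorem IsChain.transGen_of_mem {α : Type*} {R : α → α → Prop} {a b : α} {l : List α}
    (h : IsChain R (a :: l)) (hb : b ∈ l) : TransGen R a b :=
  (h.imp fun _ _ => TransGen.single).rel_cons hb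

theorem IsChain.transGen_of_mem_cycle {α : Type*} {R : α → α → Prop} {v a b : α}
    {l : List α} (h : IsChain R (v :: (l ++ [v]))) (ha : a ∈ v :: l) (hb : b ∈ v :: l) :
    TransGen R a b := by
  have hav : ReflTransGen R a v := by
    have h' : IsChain R ((v :: l) ++ [v]) := h
    exact h'.backwards_concat_induction (ReflTransGen R · v) _
      (fun _ _ hxy hyv => hyv.head hxy) ReflTransGen.refl a ha
  have hvb : TransGen R v b := h.transGen_of_mem (by simpa [or_comm] using hb)
  exact TransGen.trans_right hav hvb

end List

variable {V : Type} {D : V → V → Prop}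

theorem AcyclicOn.mono {S T : Set V} (h : AcyclicOn D T) (hST : S ⊆ T) : AcyclicOn D S :=
  fun v l hnd hch =>
    h v l hnd (List.IsChain.imp (fun _ _ hab => ⟨hST hab.1, hST hab.2.1, hab.2.2⟩) hch)

theorem AcyclicOn.exists_mem_cycle_notMem {S T : Set V} (hT : AcyclicOn D T) {v : V}
    {l : List V} (hnd : (v :: l).Nodup) (hch : List.IsChain (restrictRel D S) (v :: (l ++ [v]))) :
    ∃ a ∈ v :: l, a ∉ T := by
  by_contra! hall
  refine hT v l hnd (List.IsChain.imp_of_mem_imp (fun a b ha hb hab => ?_) hch)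
  have hvl : ∀ w ∈ v :: (l ++ [v]), w ∈ T := fun w hw => hall w (by simp at hw ⊢; tauto)
  exact ⟨hvl a ha, hvl b hb, hab.2.2⟩

theorem AcyclicOn.union {X Y : Set V} (hX : AcyclicOn D X) (hY : AcyclicOn D Y)
    (h : ∀ a ∈ X, ∀ b ∈ Y, ¬ TransGen (restrictRel D (X ∪ Y)) a b) : AcyclicOn D (X ∪ Y) := by
  intro v l hnd hch
  have hcyc : ∀ a ∈ v :: l, ∀ b ∈ v :: l, TransGen (restrictRel D (X ∪ Y)) a b :=
    fun a ha b hb => List.IsChain.transGen_of_mem_cycle hch ha hb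
  have hmem : ∀ a ∈ v :: l, a ∈ X ∪ Y := fun a ha => by
    obtain ⟨_, hrel, _⟩ := TransGen.head'_iff.mp (hcyc a ha a ha)
    exact hrel.1
  obtain ⟨a, hal, haX⟩ := hX.exists_mem_cycle_notMem hnd hch
  obtain ⟨b, hbl, hbY⟩ := hY.exists_mem_cycle_notMem hnd hch
  exact h b ((hmem b hbl).resolve_right hbY) a ((hmem a hal).resolve_left haX) (hcyc b hbl a hal)

theorem part_acyclic_of_disjoint_reach_general {V : Type} (D : V → V → Prop) (x : V)
    (V₁ V₂ V₃ : Set V)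
    (hpart : V₁ ∪ V₂ ∪ V₃ = {x}ᶜ)
    (hd12 : Disjoint V₁ V₂) (hd23 : Disjoint V₂ V₃)
    (hac1 : AcyclicOn D V₁) (hac3 : AcyclicOn D V₃)
    (B₁ B₂ B₁' A₁ A₂ : Set V)
    (hB₁ : B₁ = {v ∈ V₁ | Relation.ReflTransGen (restrictRel D ({x} ∪ V₁)) x v ∧
      Relation.ReflTransGen (restrictRel D ({x} ∪ V₁)) v x})
    (hB₂ : B₂ = {v ∈ V₂ | Relation.ReflTransGen (restrictRel D ({x} ∪ V₂)) x v ∧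
      Relation.ReflTransGen (restrictRel D ({x} ∪ V₂)) v x})
    (hB₁' : B₁' = {v ∈ V₁ | ∃ b ∈ B₁, Relation.ReflTransGen
      (fun p q => p ∉ ({x} ∪ B₂ : Set V) ∧ q ∉ ({x} ∪ B₂ : Set V) ∧ D p q) b v})
    (hA₁ : A₁ = {v ∈ V₃ | ∃ b ∈ B₁, Relation.ReflTransGen
      (fun p q => p ∉ ({x} ∪ B₂ : Set V) ∧ q ∉ ({x} ∪ B₂ : Set V) ∧ D p q) b v})
    (hA₂ : A₂ = {v ∈ V₃ | ∃ b ∈ B₂, Relation.ReflTransGen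
      (fun p q => p ∉ ({x} ∪ B₁ : Set V) ∧ q ∉ ({x} ∪ B₁ : Set V) ∧ D p q) b v})
    (hAA : A₁ ∩ A₂ = ∅) :
    AcyclicOn D (B₁ ∪ B₁' ∪ A₂) := by
  have hB₁V₁ : B₁ ⊆ V₁ := hB₁ ▸ fun _ hv => hv.1
  have hB₁'V₁ : B₁' ⊆ V₁ := hB₁' ▸ fun _ hv => hv.1
  have hA₂V₃ : A₂ ⊆ V₃ := hA₂ ▸ fun _ hv => hv.1
  have hB₂V₂ : B₂ ⊆ V₂ := hB₂ ▸ fun _ hv => hv.1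
  have hx : x ∉ V₁ ∪ V₃ := fun h => by
    simpa using hpart.subset (Set.union_subset_union_left V₃ Set.subset_union_left h)
  have havoid : Disjoint (B₁ ∪ B₁' ∪ A₂) ({x} ∪ B₂) :=
    (Disjoint.union_right (Set.disjoint_singleton_right.mpr hx)
      ((Disjoint.union_left hd12 hd23.symm).mono_right hB₂V₂)).mono_left
      (Set.union_subset_union (Set.union_subset hB₁V₁ hB₁'V₁) hA₂V₃)
  refine (hac1.mono (Set.union_subset hB₁V₁ hB₁'V₁)).union (hac3.mono hA₂V₃) ?_
  intro a ha b hb hab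
  obtain ⟨b₀, hb₀, hb₀a⟩ : ∃ b₀ ∈ B₁, ReflTransGen
      (fun p q => p ∉ ({x} ∪ B₂ : Set V) ∧ q ∉ ({x} ∪ B₂ : Set V) ∧ D p q) b₀ a := by
    rcases ha with ha | ha
    · exact ⟨a, ha, .refl⟩
    · exact (hB₁' ▸ ha).2
  have hbA₁ : b ∈ A₁ := hA₁ ▸ ⟨hA₂V₃ hb, b₀, hb₀, hb₀a.trans <| ReflTransGen.mono
    (fun _ _ hpq =>
      ⟨havoid.notMem_of_mem_left hpq.1, havoid.notMem_of_mem_left hpq.2.1, hpq.2.2⟩)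
    _ _ hab.to_reflTransGen⟩
  exact Set.eq_empty_iff_forall_notMem.mp hAA b ⟨hbA₁, hb⟩

theorem part_acyclic_of_disjoint_reach {V : Type} (D : V → V → Prop) (x : V)
    (V₁ V₂ V₃ : Set V)
    (hpart : V₁ ∪ V₂ ∪ V₃ = {x}ᶜ)
    (hd12 : Disjoint V₁ V₂) (hd13 : Disjoint V₁ V₃) (hd23 : Disjoint V₂ V₃)
    (hac1 : AcyclicOn D V₁) (hac2 : AcyclicOn D V₂) (hac3 : AcyclicOn D V₃)
    (B₁ B₂ B₁' A₁ A₂ : Set V)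
    (hB₁ : B₁ = {v ∈ V₁ | Relation.ReflTransGen (restrictRel D ({x} ∪ V₁)) x v ∧
      Relation.ReflTransGen (restrictRel D ({x} ∪ V₁)) v x})
    (hB₂ : B₂ = {v ∈ V₂ | Relation.ReflTransGen (restrictRel D ({x} ∪ V₂)) x v ∧
      Relation.ReflTransGen (restrictRel D ({x} ∪ V₂)) v x})
    (hB₁' : B₁' = {v ∈ V₁ | ∃ b ∈ B₁, Relation.ReflTransGen
      (fun p q => p ∉ ({x} ∪ B₂ : Set V) ∧ q ∉ ({x} ∪ B₂ : Set V) ∧ D p q) b v})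
    (hA₁ : A₁ = {v ∈ V₃ | ∃ b ∈ B₁, Relation.ReflTransGen
      (fun p q => p ∉ ({x} ∪ B₂ : Set V) ∧ q ∉ ({x} ∪ B₂ : Set V) ∧ D p q) b v})
    (hA₂ : A₂ = {v ∈ V₃ | ∃ b ∈ B₂, Relation.ReflTransGen
      (fun p q => p ∉ ({x} ∪ B₁ : Set V) ∧ q ∉ ({x} ∪ B₁ : Set V) ∧ D p q) b v})
    (hAA : A₁ ∩ A₂ = ∅) :
    AcyclicOn D (B₁ ∪ B₁' ∪ A₂) :=
  part_acyclic_of_disjoint_reach_general D x V₁ V₂ V₃ hpart hd12 hd23 hac1 hac3 B₁ B₂ B₁' A₁ A₂ hB₁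
    hB₂ hB₁' hA₁ hA₂ hAA
end
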